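/- Let γ > 0 and let X_0, …, X_K ∈ ℝ^{N_i × d} and Y_i ∈ ℝ^{N_i × d_{y_i}} be the phase-wise activation and label matrices. Define sequences recursively by R̂_0 = (X_0ᵀ X_0 + γI)⁻¹, Ŵ_0 = R̂_0 X_0ᵀ Y_0, and for k ≥ 1: R̂_k = R̂_{k-1} − R̂_{k-1} X_kᵀ (I + X_k R̂_{k-1} X_kᵀ)⁻¹ X_k R̂_{k-1} and Ŵ_k = Ŵ'_{k-1} + R̂_k X_kᵀ ([0 Y_k] − X_k Ŵ'_{k-1}), where Ŵ'_{k-1} = [Ŵ_{k-1} 0] is Ŵ_{k-1} zero-padded on the right with d_{y_k} zero columns and [0 Y_k] is Y_k zero-padded on the left with d_{y_0}+…+d_{y_{k-1}} zero columns. Then for every k = 0, 1, …, K: R̂_k = (X_{0:k}ᵀ X_{0:k} + γI)⁻¹ and Ŵ_k = R̂_k X_{0:k}ᵀ Y_{0:k}, where X_{0:k} is the row-wise concatenation of X_0, …, X_k and Y_{0:k} is the block matrix with Y_i in the (i-th row block, i-th column block) position and zeros elsewhere. Hence the incrementally trained weight equals the weight obtained by joint training on all data of phases 0 through k. -/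

import Mathlib

open Matrix

/-- Row-wise concatenation `X_{0:k}` of phase-wise activation matrices `X_0, …, X_k`. -/
def concatRows {d : ℕ} (N : ℕ → ℕ)
    (X : ∀ i : ℕ, Matrix (Fin (N i)) (Fin d) ℝ) (k : ℕ) :
    Matrix ((i : Fin (k + 1)) × Fin (N i)) (Fin d) ℝ :=
  fun p j => X p.1 p.2 j

/-- Block matrix `Y_{0:k}` whose `(i,i)`-th block is the phase-`i` label matrix `Y_i`
and whose off-(block-)diagonal blocks vanish. -/
def blockDiagLabels (N dy : ℕ → ℕ)
    (Y : ∀ i : ℕ, Matrix (Fin (N i)) (Fin (dy i)) ℝ) (k : ℕ) :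
    Matrix ((i : Fin (k + 1)) × Fin (N i)) ((i : Fin (k + 1)) × Fin (dy i)) ℝ :=
  fun p q =>
    if h : (p.1 : ℕ) = (q.1 : ℕ) then
      Y p.1 p.2 (Fin.cast (congrArg dy h.symm) q.2)
    else 0

/-- `[W  0]`: a weight matrix with column blocks for phases `0, …, k-1`, zero-padded on the
right with the `d_{y_k}` zero columns of the new phase `k`. -/
def padColsRight {d : ℕ} (dy : ℕ → ℕ) (k : ℕ)
    (W : Matrix (Fin d) ((i : Fin k) × Fin (dy i)) ℝ) :
    Matrix (Fin d) ((i : Fin (k + 1)) × Fin (dy i)) ℝ :=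
  fun r q => if h : (q.1 : ℕ) < k then W r ⟨⟨q.1, h⟩, q.2⟩ else 0

/-- `[0  Y_k]`: the phase-`k` label matrix zero-padded on the left with the column blocks of
all previous phases. -/
def padColsLeft {n : ℕ} (dy : ℕ → ℕ) (k : ℕ)
    (Yk : Matrix (Fin n) (Fin (dy k)) ℝ) :
    Matrix (Fin n) ((i : Fin (k + 1)) × Fin (dy i)) ℝ :=
  fun r q => if h : (q.1 : ℕ) = k then Yk r (Fin.cast (congrArg dy h) q.2) else 0

/-- The recursively updated inverted auto-correlation matrix:
`R̂_0 = (X_0ᵀ X_0 + γI)⁻¹` and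
`R̂_k = R̂_{k−1} − R̂_{k−1} X_kᵀ (I + X_k R̂_{k−1} X_kᵀ)⁻¹ X_k R̂_{k−1}`. -/
noncomputable def Rhat {d : ℕ} (γ : ℝ) (N : ℕ → ℕ)
    (X : ∀ i : ℕ, Matrix (Fin (N i)) (Fin d) ℝ) : ℕ → Matrix (Fin d) (Fin d) ℝ
  | 0 => ((X 0)ᵀ * X 0 + γ • (1 : Matrix (Fin d) (Fin d) ℝ))⁻¹
  | k + 1 =>
      Rhat γ N X k -
        Rhat γ N X k * (X (k + 1))ᵀ *
          ((1 : Matrix (Fin (N (k + 1))) (Fin (N (k + 1))) ℝ) +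
              X (k + 1) * Rhat γ N X k * (X (k + 1))ᵀ)⁻¹ *
          X (k + 1) * Rhat γ N X k

/-- The recursively updated (concatenated) weight matrix:
`Ŵ_0 = R̂_0 X_0ᵀ Y_0` and
`Ŵ_k = [Ŵ_{k−1} 0] + R̂_k X_kᵀ ([0 Y_k] − X_k [Ŵ_{k−1} 0])`. -/
noncomputable def What {d : ℕ} (γ : ℝ) (N dy : ℕ → ℕ)
    (X : ∀ i : ℕ, Matrix (Fin (N i)) (Fin d) ℝ)
    (Y : ∀ i : ℕ, Matrix (Fin (N i)) (Fin (dy i)) ℝ) :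
    (k : ℕ) → Matrix (Fin d) ((i : Fin (k + 1)) × Fin (dy i)) ℝ
  | 0 => fun r q =>
      (Rhat γ N X 0 * (X 0)ᵀ * Y 0) r
        (Fin.cast (congrArg dy (Nat.lt_one_iff.mp q.1.isLt)) q.2)
  | k + 1 =>
      padColsRight dy (k + 1) (What γ N dy X Y k) +
        Rhat γ N X (k + 1) * (X (k + 1))ᵀ *
          (padColsLeft dy (k + 1) (Y (k + 1)) -
            X (k + 1) * padColsRight dy (k + 1) (What γ N dy X Y k))

/-!
Write `A_k = X_{0:k}ᵀ X_{0:k} + γI`. Since `A_k = A_{k-1} + X_kᵀ X_k`, the recursion for `R̂_k`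
is the Woodbury identity for this update, so `R̂_k = A_k⁻¹`. The recursion for `Ŵ_k` is a
rearrangement of `A_k⁻¹ (A_{k-1} Ŵ'_{k-1} + X_kᵀ [0 Y_k])`; as zero-padding columns commutes
with left multiplication, `A_{k-1} Ŵ'_{k-1} = [X_{0:k-1}ᵀ Y_{0:k-1}  0]`, and adding
`X_kᵀ [0 Y_k]` gives `X_{0:k}ᵀ Y_{0:k}`.
-/

section RecursiveUpdate

variable {R m p q : Type*} [CommRing R] [Fintype m] [DecidableEq m] [Fintype p]

theorem add_nonsing_inv_mul_residual_eq (A : Matrix m m R) (V : Matrix m p R)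
    (U : Matrix p m R) (W : Matrix m q R) (Z : Matrix p q R) (h : IsUnit (A + V * U)) :
    W + (A + V * U)⁻¹ * V * (Z - U * W) = (A + V * U)⁻¹ * (A * W + V * Z) := by
  have hdet : IsUnit (A + V * U).det := (isUnit_iff_isUnit_det _).mp h
  calc W + (A + V * U)⁻¹ * V * (Z - U * W)
      = (A + V * U)⁻¹ * ((A + V * U) * W + V * (Z - U * W)) := by
        rw [Matrix.mul_add, ← Matrix.mul_assoc, nonsing_inv_mul _ hdet, Matrix.one_mul,
          Matrix.mul_assoc]
    _ = (A + V * U)⁻¹ * (A * W + V * Z) := by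
        rw [Matrix.add_mul, Matrix.mul_sub, Matrix.mul_assoc]
        abel_nf

end RecursiveUpdate

section PosDef

variable {m n : Type*} [Fintype m] [Fintype n] [DecidableEq n]

theorem posDef_transpose_mul_self_add_smul_one {γ : ℝ} (hγ : 0 < γ) (M : Matrix m n ℝ) :
    (Mᵀ * M + γ • (1 : Matrix n n ℝ)).PosDef := by
  have hgram : (Mᵀ * M).PosSemidef := by
    simpa only [conjTranspose_eq_transpose_of_trivial] using posSemidef_conjTranspose_mul_self M
  refine PosDef.posSemidef_add hgram ?_
  rw [smul_one_eq_diagonal]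
  exact PosDef.diagonal fun _ => hγ

theorem Matrix.PosDef.inv_add_transpose_mul_self [DecidableEq m] {A : Matrix n n ℝ}
    (hA : A.PosDef) (U : Matrix m n ℝ) :
    (A + Uᵀ * U)⁻¹ = A⁻¹ - A⁻¹ * Uᵀ * (1 + U * A⁻¹ * Uᵀ)⁻¹ * U * A⁻¹ := by
  have hcap : (1 + U * A⁻¹ * Uᵀ).PosDef := by
    refine PosDef.one.add_posSemidef ?_
    simpa only [conjTranspose_eq_transpose_of_trivial] using
      hA.inv.posSemidef.mul_mul_conjTranspose_same U
  simpa only [Matrix.mul_one, inv_one] using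
    add_mul_mul_inv_eq_sub A Uᵀ 1 U hA.isUnit isUnit_one (by simpa using hcap.isUnit)

end PosDef

section Blocks

variable {d : ℕ} {N dy : ℕ → ℕ} (X : ∀ i : ℕ, Matrix (Fin (N i)) (Fin d) ℝ)
  (Y : ∀ i : ℕ, Matrix (Fin (N i)) (Fin (dy i)) ℝ)

theorem concatRows_zero_transpose_mul_self :
    (concatRows N X 0)ᵀ * concatRows N X 0 = (X 0)ᵀ * X 0 := by
  ext r c
  simp only [mul_apply, transpose_apply, concatRows]
  rw [← Finset.univ_sigma_univ, Finset.sum_sigma, Fin.sum_univ_one]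
  rfl

theorem concatRows_succ_transpose_mul_self (k : ℕ) :
    (concatRows N X (k + 1))ᵀ * concatRows N X (k + 1) =
      (concatRows N X k)ᵀ * concatRows N X k + (X (k + 1))ᵀ * X (k + 1) := by
  ext r c
  simp only [mul_apply, transpose_apply, Matrix.add_apply, concatRows]
  rw [← Finset.univ_sigma_univ, Finset.sum_sigma, Fin.sum_univ_castSucc,
    ← Finset.univ_sigma_univ, Finset.sum_sigma]
  rfl

theorem concatRows_transpose_mul_blockDiagLabels_apply (k : ℕ) (r : Fin d)
    (c : (i : Fin (k + 1)) × Fin (dy i)) :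
    ((concatRows N X k)ᵀ * blockDiagLabels N dy Y k) r c = ((X c.1)ᵀ * Y c.1) r c.2 := by
  simp only [mul_apply, transpose_apply, concatRows, blockDiagLabels]
  rw [← Finset.univ_sigma_univ, Finset.sum_sigma, Fintype.sum_eq_single c.1]
  · simp
  · intro i hi
    simp [Fin.val_ne_of_ne hi]

theorem mul_padColsRight {e : ℕ} (k : ℕ) (M : Matrix (Fin e) (Fin d) ℝ)
    (W : Matrix (Fin d) ((i : Fin k) × Fin (dy i)) ℝ) :
    M * padColsRight dy k W = padColsRight dy k (M * W) := by
  ext r c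
  by_cases h : (c.1 : ℕ) < k <;> simp [padColsRight, mul_apply, h]

theorem mul_padColsLeft {e n : ℕ} (k : ℕ) (M : Matrix (Fin e) (Fin n) ℝ)
    (Yk : Matrix (Fin n) (Fin (dy k)) ℝ) :
    M * padColsLeft dy k Yk = padColsLeft dy k (M * Yk) := by
  ext r c
  by_cases h : (c.1 : ℕ) = k <;> simp [padColsLeft, mul_apply, h]

theorem concatRows_succ_transpose_mul_blockDiagLabels (k : ℕ) :
    (concatRows N X (k + 1))ᵀ * blockDiagLabels N dy Y (k + 1) =
      padColsRight dy (k + 1) ((concatRows N X k)ᵀ * blockDiagLabels N dy Y k) +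
        (X (k + 1))ᵀ * padColsLeft dy (k + 1) (Y (k + 1)) := by
  rw [mul_padColsLeft]
  ext r ⟨⟨i, hi⟩, j⟩
  rw [Matrix.add_apply, concatRows_transpose_mul_blockDiagLabels_apply]
  rcases Nat.lt_succ_iff_lt_or_eq.mp hi with hlt | rfl
  · simp only [padColsRight, padColsLeft]
    rw [dif_pos hlt, dif_neg hlt.ne, add_zero, concatRows_transpose_mul_blockDiagLabels_apply]
  · simp only [padColsRight, padColsLeft]
    rw [dif_neg (lt_irrefl _)]
    simp [Fin.cast]

end Blocks

section CRLS

variable {d : ℕ} {γ : ℝ} {N dy : ℕ → ℕ} (X : ∀ i : ℕ, Matrix (Fin (N i)) (Fin d) ℝ)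
  (Y : ∀ i : ℕ, Matrix (Fin (N i)) (Fin (dy i)) ℝ)

theorem Rhat_eq_inv (hγ : 0 < γ) (k : ℕ) :
    Rhat γ N X k = ((concatRows N X k)ᵀ * concatRows N X k +
      γ • (1 : Matrix (Fin d) (Fin d) ℝ))⁻¹ := by
  induction k with
  | zero => rw [concatRows_zero_transpose_mul_self, Rhat]
  | succ k ih =>
    rw [concatRows_succ_transpose_mul_self, add_right_comm, Rhat, ih,
      (posDef_transpose_mul_self_add_smul_one hγ _).inv_add_transpose_mul_self]

theorem What_eq_Rhat_mul (hγ : 0 < γ) (k : ℕ) :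
    What γ N dy X Y k = Rhat γ N X k * (concatRows N X k)ᵀ * blockDiagLabels N dy Y k := by
  induction k with
  | zero =>
    ext r ⟨⟨i, hi⟩, j⟩
    obtain rfl : i = 0 := Nat.lt_one_iff.mp hi
    simp only [What, Matrix.mul_assoc, mul_apply (M := Rhat γ N X 0),
      concatRows_transpose_mul_blockDiagLabels_apply]
    rfl
  | succ k ih =>
    set A := (concatRows N X k)ᵀ * concatRows N X k + γ • (1 : Matrix (Fin d) (Fin d) ℝ)
    have hA : A.PosDef := posDef_transpose_mul_self_add_smul_one hγ _
    have hgram : (concatRows N X (k + 1))ᵀ * concatRows N X (k + 1) +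
        γ • (1 : Matrix (Fin d) (Fin d) ℝ) = A + (X (k + 1))ᵀ * X (k + 1) := by
      rw [concatRows_succ_transpose_mul_self, add_right_comm]
    have hAW : A * padColsRight dy (k + 1) (What γ N dy X Y k) =
        padColsRight dy (k + 1) ((concatRows N X k)ᵀ * blockDiagLabels N dy Y k) := by
      rw [mul_padColsRight, ih, Rhat_eq_inv X hγ, Matrix.mul_assoc,
        mul_nonsing_inv_cancel_left _ _ ((isUnit_iff_isUnit_det _).mp hA.isUnit)]
    rw [What, Rhat_eq_inv X hγ, hgram, add_nonsing_inv_mul_residual_eq _ _ _ _ _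
      (by rw [← hgram]; exact (posDef_transpose_mul_self_add_smul_one hγ _).isUnit),
      hAW, Matrix.mul_assoc, concatRows_succ_transpose_mul_blockDiagLabels]

end CRLS

/-- **Equivalence of C-RLS class-incremental learning and joint learning.**
For `γ > 0` and phase-wise activations `X_i ∈ ℝ^{N_i×d}` and labels `Y_i ∈ ℝ^{N_i×d_{y_i}}`,
the recursively computed `R̂_k` and `Ŵ_k` coincide, for every `k = 0, 1, …, K`, with the
batch (joint-learning) quantities: `R̂_k = (X_{0:k}ᵀ X_{0:k} + γI)⁻¹` and
`Ŵ_k = R̂_k X_{0:k}ᵀ Y_{0:k}`, where `X_{0:k}` is the row-wise concatenation of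
`X_0, …, X_k` and `Y_{0:k}` the block matrix with the `Y_i` on its block diagonal. -/
theorem crls_equals_joint_learning
    {d : ℕ} (γ : ℝ) (hγ : 0 < γ) (K : ℕ) (N dy : ℕ → ℕ)
    (X : ∀ i : ℕ, Matrix (Fin (N i)) (Fin d) ℝ)
    (Y : ∀ i : ℕ, Matrix (Fin (N i)) (Fin (dy i)) ℝ) :
    ∀ k ≤ K,
      Rhat γ N X k =
        ((concatRows N X k)ᵀ * concatRows N X k + γ • (1 : Matrix (Fin d) (Fin d) ℝ))⁻¹ ∧
      What γ N dy X Y k =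
        Rhat γ N X k * (concatRows N X k)ᵀ * blockDiagLabels N dy Y k := by
  intro k _
  exact ⟨Rhat_eq_inv X hγ k, What_eq_Rhat_mul X Y hγ k⟩
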